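/- Let Γ be a simple graph in which every edge lies in a unique triangle, and let Γ̃ be the graph obtained by subdividing: for each triangle of Γ add a new barycenter vertex joined to the three vertices of the triangle, and delete the original edges. Then any cycle in Γ̃ with all vertices distinct has at least 8 vertices. -/

import Mathlib

/-!
`Γ̃` is bipartite, so its cycles have even length, and a cycle has length at least 3;
it remains to exclude lengths 4 and 6. A 4-cycle `v t w s` would put the edge `vw` of `Γ`
in the two triangles `t ≠ s`. A 6-cycle `v t w s u r` makes `v, w, u` pairwise adjacent,
so `{v, w, u}` is a triangle of `Γ`, and it is the unique triangle through `vw` as well as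
the one through `wu`, forcing `t = s`.
-/

/-- A triangle of a simple graph: a 3-element vertex set, pairwise adjacent. -/
def IsTriangle {V : Type*} (Γ : SimpleGraph V) (t : Finset V) : Prop :=
  t.card = 3 ∧ ∀ u ∈ t, ∀ v ∈ t, u ≠ v → Γ.Adj u v

/-- The subdivided graph `Γ̃`: for each triangle of `Γ` add a new barycenter vertex
joined to the three vertices of the triangle, and delete the original edges. -/
def Subdiv {V : Type*} (Γ : SimpleGraph V) :
    SimpleGraph (V ⊕ {t : Finset V // IsTriangle Γ t}) where
  Adj x y :=
    (∃ v t, x = Sum.inl v ∧ y = Sum.inr t ∧ v ∈ t.1) ∨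
    (∃ v t, x = Sum.inr t ∧ y = Sum.inl v ∧ v ∈ t.1)
  symm := by
    constructor
    rintro x y (⟨v, t, rfl, rfl, h⟩ | ⟨v, t, rfl, rfl, h⟩)
    · exact Or.inr ⟨v, t, rfl, rfl, h⟩
    · exact Or.inl ⟨v, t, rfl, rfl, h⟩
  loopless := by
    constructor
    rintro x (⟨v, t, rfl, h, _⟩ | ⟨v, t, rfl, h, _⟩) <;> simp at h

open SimpleGraph

section

variable {V : Type*} {Γ : SimpleGraph V}

lemma isTriangle_iff_isNClique {t : Finset V} : IsTriangle Γ t ↔ Γ.IsNClique 3 t := by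
  simp [IsTriangle, isNClique_iff, IsClique, Set.Pairwise, and_comm]

namespace Subdiv

lemma adj_inl_iff {v : V} {y : V ⊕ {t : Finset V // IsTriangle Γ t}} :
    (Subdiv Γ).Adj (.inl v) y ↔ ∃ t, y = .inr t ∧ v ∈ t.1 := by
  simp [Subdiv]

lemma adj_inr_iff {t : {t : Finset V // IsTriangle Γ t}}
    {y : V ⊕ {t : Finset V // IsTriangle Γ t}} :
    (Subdiv Γ).Adj (.inr t) y ↔ ∃ v, y = .inl v ∧ v ∈ t.1 := by
  simp [Subdiv]

def twoColoring : (Subdiv Γ).Coloring Bool :=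
  Coloring.mk Sum.isLeft <| by
    rintro _ _ (⟨v, t, rfl, rfl, -⟩ | ⟨v, t, rfl, rfl, -⟩) <;> simp

lemma even_length {x : V ⊕ {t : Finset V // IsTriangle Γ t}} (c : (Subdiv Γ).Walk x x) :
    Even c.length :=
  (twoColoring.even_length_iff_congr c).mpr Iff.rfl

lemma exists_isCycle_inl_length_eq {x : V ⊕ {t : Finset V // IsTriangle Γ t}}
    {c : (Subdiv Γ).Walk x x} (hc : c.IsCycle) :
    ∃ (v : V) (c' : (Subdiv Γ).Walk (.inl v) (.inl v)), c'.IsCycle ∧ c'.length = c.length := by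
  classical
  rcases x with v | t
  · exact ⟨v, c, hc, rfl⟩
  · obtain ⟨v, hv, -⟩ := adj_inr_iff.mp (c.adj_snd hc.not_nil)
    have hmem : Sum.inl v ∈ c.support := hv ▸ c.getVert_mem_support 1
    exact ⟨v, c.rotate _ hmem, hc.rotate hmem, c.length_rotate _ hmem⟩

end Subdiv

variable (htri : ∀ u v, Γ.Adj u v →
  ∃! t : {t : Finset V // IsTriangle Γ t}, u ∈ t.1 ∧ v ∈ t.1)
include htri

lemma triangle_eq_of_mem {t s : {t : Finset V // IsTriangle Γ t}} {u v : V} (huv : u ≠ v)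
    (hut : u ∈ t.1) (hvt : v ∈ t.1) (hus : u ∈ s.1) (hvs : v ∈ s.1) : t = s :=
  (htri u v (t.2.2 u hut v hvt huv)).unique ⟨hut, hvt⟩ ⟨hus, hvs⟩

lemma triangle_eq_of_cyclic_mem {t s r : {t : Finset V // IsTriangle Γ t}} {v w u : V}
    (hvw : v ≠ w) (hwu : w ≠ u) (huv : u ≠ v) (hvt : v ∈ t.1) (hwt : w ∈ t.1)
    (hws : w ∈ s.1) (hus : u ∈ s.1) (hur : u ∈ r.1) (hvr : v ∈ r.1) : t = s := by
  classical
  have hT : IsTriangle Γ {v, w, u} := isTriangle_iff_isNClique.mpr <|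
    is3Clique_triple_iff.mpr ⟨t.2.2 v hvt w hwt hvw, r.2.2 v hvr u hur huv.symm,
      s.2.2 w hws u hus hwu⟩
  let T : {t : Finset V // IsTriangle Γ t} := ⟨{v, w, u}, hT⟩
  have hvT : v ∈ T.1 := by simp [T]
  have hwT : w ∈ T.1 := by simp [T]
  have huT : u ∈ T.1 := by simp [T]
  exact (triangle_eq_of_mem htri hvw hvt hwt hvT hwT).trans
    (triangle_eq_of_mem htri hwu hwT huT hws hus)

lemma Subdiv.length_ne_four {v : V} {c : (Subdiv Γ).Walk (.inl v) (.inl v)} (hc : c.IsCycle) :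
    c.length ≠ 4 := by
  intro hl
  rcases c with _ | ⟨h₁, _ | ⟨h₂, _ | ⟨h₃, _ | ⟨h₄, _ | ⟨_, _⟩⟩⟩⟩⟩ <;> simp at hl
  obtain ⟨t, rfl, hvt⟩ := adj_inl_iff.mp h₁
  obtain ⟨w, rfl, hwt⟩ := adj_inr_iff.mp h₂
  obtain ⟨s, rfl, hws⟩ := adj_inl_iff.mp h₃
  obtain ⟨_, hv, hvs⟩ := adj_inr_iff.mp h₄
  cases Sum.inl.inj hv
  obtain ⟨hts, hwv⟩ : t ≠ s ∧ w ≠ v := by simpa using hc.support_nodup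
  exact hts (triangle_eq_of_mem htri hwv.symm hvt hwt hvs hws)

lemma Subdiv.length_ne_six {v : V} {c : (Subdiv Γ).Walk (.inl v) (.inl v)} (hc : c.IsCycle) :
    c.length ≠ 6 := by
  intro hl
  rcases c with _ | ⟨h₁, _ | ⟨h₂, _ | ⟨h₃, _ | ⟨h₄, _ | ⟨h₅, _ | ⟨h₆, _ | ⟨_, _⟩⟩⟩⟩⟩⟩⟩ <;>
    simp at hl
  obtain ⟨t, rfl, hvt⟩ := adj_inl_iff.mp h₁
  obtain ⟨w, rfl, hwt⟩ := adj_inr_iff.mp h₂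
  obtain ⟨s, rfl, hws⟩ := adj_inl_iff.mp h₃
  obtain ⟨u, rfl, hus⟩ := adj_inr_iff.mp h₄
  obtain ⟨r, rfl, hur⟩ := adj_inl_iff.mp h₅
  obtain ⟨_, hv, hvr⟩ := adj_inr_iff.mp h₆
  cases Sum.inl.inj hv
  obtain ⟨⟨hts, -⟩, ⟨hwu, hwv⟩, -, huv⟩ :
      (t ≠ s ∧ t ≠ r) ∧ (w ≠ u ∧ w ≠ v) ∧ s ≠ r ∧ u ≠ v := by
    simpa using hc.support_nodup
  exact hts (triangle_eq_of_cyclic_mem htri hwv.symm hwu huv hvt hwt hws hus hur hvr)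

end

/-- If every edge of `Γ` lies in a unique triangle, then every cycle of the subdivided
graph `Γ̃` has at least 8 vertices (equivalently, length at least 8). -/
theorem stmt4 {V : Type*} (Γ : SimpleGraph V)
    (htri : ∀ u v, Γ.Adj u v →
      ∃! t : {t : Finset V // IsTriangle Γ t}, u ∈ t.1 ∧ v ∈ t.1)
    (x : V ⊕ {t : Finset V // IsTriangle Γ t}) (c : (Subdiv Γ).Walk x x)
    (hc : c.IsCycle) : 8 ≤ c.length := by
  obtain ⟨v, c', hc', hlen⟩ := Subdiv.exists_isCycle_inl_length_eq hc
  rw [← hlen]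
  have h3 := hc'.three_le_length
  have h4 := Subdiv.length_ne_four htri hc'
  have h6 := Subdiv.length_ne_six htri hc'
  obtain ⟨k, hk⟩ := Subdiv.even_length c'
  omega
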